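/- Let $p \in \mathbb{R}[x_1,\dots,x_n]$ be a polynomial and let $g(x,y_1,y_2) = p(x)^2 + y_1^2 + y_2^3$. Then the real zero set $Y = Z(g) \subset \mathbb{R}^{n+2}$ is homeomorphic to $\mathbb{R}^{n+1}$; explicitly, the map $\mathbb{R}^{n+1} \to Y$ sending $(x, y_1)$ to $(x, y_1, (-p(x)^2 - y_1^2)^{1/3})$ is a homeomorphism onto $Y$. -/

import Mathlib

/-! Since cubing is a bijection of `ℝ`, the zero set `Y` is the graph of the continuous function
`(x, y₁) ↦ ∛(-p(x)² - y₁²)`, and the graph of a continuous map is homeomorphic to its domain. -/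

/-- The real cube root function `t ↦ t^(1/3)`. -/
noncomputable def realCbrt (t : ℝ) : ℝ :=
  if 0 ≤ t then t ^ ((1 : ℝ) / 3) else -((-t) ^ ((1 : ℝ) / 3))

lemma pow_three_realCbrt (t : ℝ) : realCbrt t ^ 3 = t := by
  have rpow_cube : ∀ s : ℝ, 0 ≤ s → (s ^ ((1 : ℝ) / 3)) ^ 3 = s := fun s hs => by
    rw [← Real.rpow_natCast, ← Real.rpow_mul hs]
    norm_num
  unfold realCbrt
  split_ifs with ht
  · exact rpow_cube t ht
  · rw [neg_pow, rpow_cube (-t) (by linarith)]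
    ring

lemma eq_realCbrt_iff {y t : ℝ} : y = realCbrt t ↔ y ^ 3 = t := by
  rw [← (Odd.pow_inj (by decide : Odd 3)), pow_three_realCbrt]

lemma continuous_realCbrt : Continuous realCbrt := by
  refine Continuous.if (fun t ht => ?_) (Real.continuous_rpow_const (by norm_num))
    ((Real.continuous_rpow_const (by norm_num)).comp continuous_neg).neg
  obtain rfl : t = 0 := (frontier_le_subset_eq continuous_const continuous_id ht).symm
  simp

def Continuous.homeomorphGraph {X Y : Type*} [TopologicalSpace X] [TopologicalSpace Y]
    {f : X → Y} (hf : Continuous f) : X ≃ₜ {z : X × Y // z.2 = f z.1} where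
  toFun x := ⟨(x, f x), rfl⟩
  invFun z := z.1.1
  left_inv _ := rfl
  right_inv z := Subtype.ext (Prod.ext rfl z.2.symm)
  continuous_toFun := (continuous_id.prodMk hf).subtype_mk _
  continuous_invFun := continuous_fst.comp continuous_subtype_val

/-- For a real polynomial `p` in `n` variables and
`g(x, y₁, y₂) = p(x)² + y₁² + y₂³`, the real zero set `Y = Z(g) ⊆ ℝ^{n+2}` is homeomorphic
to `ℝ^{n+1}`, via the map `(x, y₁) ↦ (x, y₁, (-p(x)² - y₁²)^{1/3})`. -/
theorem smoothing_Y_homeomorph (n : ℕ) (p : MvPolynomial (Fin n) ℝ) :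
    ∃ h : ((Fin n → ℝ) × ℝ) ≃ₜ
        {z : (Fin n → ℝ) × ℝ × ℝ //
          (MvPolynomial.eval z.1 p) ^ 2 + z.2.1 ^ 2 + z.2.2 ^ 3 = 0},
      ∀ xy : (Fin n → ℝ) × ℝ,
        (h xy : (Fin n → ℝ) × ℝ × ℝ) =
          (xy.1, xy.2, realCbrt (-(MvPolynomial.eval xy.1 p) ^ 2 - xy.2 ^ 2)) := by
  have hq : Continuous fun xy : (Fin n → ℝ) × ℝ => -(MvPolynomial.eval xy.1 p) ^ 2 - xy.2 ^ 2 :=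
    (((MvPolynomial.continuous_eval p).comp continuous_fst).pow 2).neg.sub (continuous_snd.pow 2)
  have graph_iff : ∀ z : ((Fin n → ℝ) × ℝ) × ℝ,
      z.2 = realCbrt (-(MvPolynomial.eval z.1.1 p) ^ 2 - z.1.2 ^ 2) ↔
        (MvPolynomial.eval z.1.1 p) ^ 2 + z.1.2 ^ 2 + z.2 ^ 3 = 0 := fun z => by
    rw [eq_realCbrt_iff]
    constructor <;> intro h <;> linarith
  exact ⟨(continuous_realCbrt.comp hq).homeomorphGraph.trans
    ((Homeomorph.prodAssoc _ _ _).subtype graph_iff), fun _ => rfl⟩
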